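/- Let A = k[x]/(x²) with Koszul resolution P as above. Define β₀: P → A by β₀(e₂) = x, β₀(e_i) = 0 otherwise, and β₁: P → P by β₁(e_{2i}) = −e_{2i−1}, β₁(e_{2i+1}) = 0. Then β₀ is a Hochschild 2-cocycle and β₁ satisfies the coderivation equation ∂(β₁) = (β₀⊗_A 1 + 1⊗_A β₀)δ₂ (with the sign (−1)^{|β|} = +1 appropriate to degree 2). -/
import Mathlib


open TensorProduct DirectSum

set_option synthInstance.maxHeartbeats 1000000
set_option maxHeartbeats 2000000

namespace Stmt11

variable (k : Type*) [Field k]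

/-- The algebra `A = k[x]/(x²)`. -/
abbrev A : Type _ := Polynomial k ⧸ Ideal.span {(Polynomial.X : Polynomial k) ^ 2}

/-- The class of `x`. -/
noncomputable def x : A k := Ideal.Quotient.mk _ Polynomial.X

/-- `A ⊗ A`, the free rank one `A`-bimodule. -/
abbrev T2 : Type _ := A k ⊗[k] A k

/-- `A ⊗ A ⊗ A`, the underlying bimodule of `(A⊗A) ⊗_A (A⊗A)`. -/
abbrev T3 : Type _ := A k ⊗[k] (A k ⊗[k] A k)

noncomputable instance : CommRing (T2 k) := inferInstance
noncomputable instance : Algebra k (T2 k) := inferInstance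
noncomputable instance : CommRing (T3 k) := inferInstance
noncomputable instance : Algebra k (T3 k) := inferInstance

/-- `u = x⊗1 − 1⊗x`. -/
noncomputable def u : T2 k := x k ⊗ₜ[k] 1 - 1 ⊗ₜ[k] x k

/-- `v = x⊗1 + 1⊗x`. -/
noncomputable def v : T2 k := x k ⊗ₜ[k] 1 + 1 ⊗ₜ[k] x k

/-- The element by which the differential `d(e_i) = e_{i−1}·w i` multiplies:
out of an odd-indexed generator it is `u`, out of an even-indexed one it is `v`
(so that the resolution ends `⋯ →·v A⊗A →·u A⊗A →μ A`). -/
noncomputable def w (i : ℕ) : T2 k := if Odd i then u k else v k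

/-- The shifted 2-periodic Koszul resolution `P = ⊕_{i∈ℕ} (A⊗A)·e_i`. -/
abbrev M : Type _ := ⨁ _i : ℕ, T2 k

/-- `P ⊗_A P = ⊕_{(j,l)} (A⊗A⊗A)·(e_j ⊗ e_l)`. -/
abbrev N : Type _ := ⨁ _p : ℕ × ℕ, T3 k

/-- The differential of `P`: `e_i ↦ e_{i−1} · w i`. -/
noncomputable def dP : M k →ₗ[k] M k :=
  DirectSum.toModule k ℕ (M k) fun i =>
    match i with
    | 0 => 0
    | (j + 1) =>
        (DirectSum.lof k ℕ (fun _ => T2 k) j) ∘ₗ LinearMap.mulRight k (w k (j + 1))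

/-- The bimodule map `A⊗A → A⊗A⊗A`, `a⊗b ↦ a⊗1⊗b` (i.e. `a e_j ⊗_A e_l b`). -/
noncomputable def ι13 : T2 k →ₗ[k] T3 k :=
  TensorProduct.map LinearMap.id ((TensorProduct.mk k (A k) (A k)) 1)

/-- The diagonal `δ₂ : P → P ⊗_A P`, `δ₂(e_i) = Σ_{j+l=i} (−1)^j e_j ⊗_A e_l`. -/
noncomputable def δ₂ : M k →ₗ[k] N k :=
  DirectSum.toModule k ℕ (N k) fun i =>
    ∑ j ∈ Finset.range (i + 1),
      ((-1 : ℤ) ^ j) •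
        ((DirectSum.lof k (ℕ × ℕ) (fun _ => T3 k) (j, i - j)) ∘ₗ ι13 k)

/-- The Hochschild 2-cocycle `β₀ : P → A` with `β₀(e₂) = x`,
`β₀(e_i) = 0` for `i ≠ 2`; on `a e₂ b` it takes the value `a x b`. -/
noncomputable def beta0 : M k →ₗ[k] A k :=
  DirectSum.toModule k ℕ (A k) fun i =>
    if i = 2 then
      (LinearMap.mul' k (A k)) ∘ₗ LinearMap.mulRight k (x k ⊗ₜ[k] (1 : A k))
    else 0

/-- `β₁ : P → P`, `β₁(e_{2i}) = −e_{2i−1}` (for `i ≥ 1`), `β₁(e_{2i+1}) = 0`. -/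
noncomputable def beta1 : M k →ₗ[k] M k :=
  DirectSum.toModule k ℕ (M k) fun i =>
    match i with
    | 0 => 0
    | (j + 1) =>
        if Even (j + 1) then (-(1 : ℤ)) • DirectSum.lof k ℕ (fun _ => T2 k) j
        else 0

/-- Collapse of the first two slots of `A⊗A⊗A` with an `x` inserted:
`a⊗(m⊗b) ↦ (a·x·m)⊗b`. -/
noncomputable def c12x : T3 k →ₗ[k] T2 k :=
  TensorProduct.map
      ((LinearMap.mul' k (A k)) ∘ₗ LinearMap.mulRight k (x k ⊗ₜ[k] (1 : A k)))
      LinearMap.id ∘ₗ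
    (TensorProduct.assoc k (A k) (A k) (A k)).symm.toLinearMap

/-- Collapse of the last two slots of `A⊗A⊗A` with an `x` inserted:
`a⊗(m⊗b) ↦ a⊗(m·x·b)`. -/
noncomputable def c23x : T3 k →ₗ[k] T2 k :=
  TensorProduct.map LinearMap.id
    ((LinearMap.mul' k (A k)) ∘ₗ LinearMap.mulRight k (x k ⊗ₜ[k] (1 : A k)))

/-- `β₀ ⊗_A 1 : P ⊗_A P → P`: nonzero only on components `e₂ ⊗ e_l`. -/
noncomputable def B01 : N k →ₗ[k] M k :=
  DirectSum.toModule k (ℕ × ℕ) (M k) fun p =>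
    match p with
    | (2, l) => (DirectSum.lof k ℕ (fun _ => T2 k) l) ∘ₗ c12x k
    | _ => 0

/-- `1 ⊗_A β₀ : P ⊗_A P → P` with the Koszul sign `(−1)^{|β₀|·deg e_j} = (−1)^{j+1}`
(`β₀` corresponds to a coderivation component of odd internal degree and
`deg e_j = 1 − j` in the shifted convention): nonzero only on `e_j ⊗ e₂`. -/
noncomputable def B10 : N k →ₗ[k] M k :=
  DirectSum.toModule k (ℕ × ℕ) (M k) fun p =>
    match p with
    | (j, 2) =>
        ((-1 : ℤ) ^ (j + 1)) • ((DirectSum.lof k ℕ (fun _ => T2 k) j) ∘ₗ c23x k)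
    | _ => 0

section Helpers
variable (k : Type*) [Field k]

lemma x_sq : x k * x k = 0 := by
  rw [x, ← map_mul, ← sq]
  exact Ideal.Quotient.eq_zero_iff_mem.mpr (Ideal.mem_span_singleton_self _)

lemma dP_lof (i : ℕ) (t : T2 k) :
    dP k (DirectSum.lof k ℕ (fun _ => T2 k) i t) =
      match i with
      | 0 => 0
      | (j+1) => DirectSum.lof k ℕ (fun _ => T2 k) j (t * w k (j+1)) := by
  cases i <;> simp [dP, DirectSum.toModule_lof]

lemma beta1_lof (i : ℕ) (t : T2 k) :
    beta1 k (DirectSum.lof k ℕ (fun _ => T2 k) i t) =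
      match i with
      | 0 => 0
      | (j+1) => if Even (j+1) then -(DirectSum.lof k ℕ (fun _ => T2 k) j t) else 0 := by
  cases i with
  | zero => simp [beta1, DirectSum.toModule_lof]
  | succ j =>
    by_cases h : Even (j+1) <;> simp [beta1, DirectSum.toModule_lof, h]

lemma beta0_lof (i : ℕ) (t : T2 k) :
    beta0 k (DirectSum.lof k ℕ (fun _ => T2 k) i t) =
      if i = 2 then LinearMap.mul' k (A k) (t * (x k ⊗ₜ[k] 1)) else 0 := by
  by_cases h : i = 2 <;> simp [beta0, DirectSum.toModule_lof, h]

lemma B01_lof (j l : ℕ) (t : T3 k) :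
    B01 k (DirectSum.lof k (ℕ × ℕ) (fun _ => T3 k) (j, l) t) =
      if j = 2 then DirectSum.lof k ℕ (fun _ => T2 k) l (c12x k t) else 0 := by
  match j with
  | 0 => simp [B01, DirectSum.toModule_lof]
  | 1 => simp [B01, DirectSum.toModule_lof]
  | 2 => simp [B01, DirectSum.toModule_lof]
  | (n+3) => simp [B01, DirectSum.toModule_lof]

lemma B10_lof (j l : ℕ) (t : T3 k) :
    B10 k (DirectSum.lof k (ℕ × ℕ) (fun _ => T3 k) (j, l) t) =
      if l = 2 then ((-1 : ℤ) ^ (j+1)) • DirectSum.lof k ℕ (fun _ => T2 k) j (c23x k t) else 0 := by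
  match l with
  | 0 => simp [B10, DirectSum.toModule_lof]
  | 1 => simp [B10, DirectSum.toModule_lof]
  | 2 => simp [B10, DirectSum.toModule_lof]
  | (n+3) => simp [B10, DirectSum.toModule_lof]

lemma δ₂_lof (i : ℕ) (t : T2 k) :
    δ₂ k (DirectSum.lof k ℕ (fun _ => T2 k) i t) =
      ∑ j ∈ Finset.range (i + 1),
        ((-1 : ℤ) ^ j) • DirectSum.lof k (ℕ × ℕ) (fun _ => T3 k) (j, i - j) (ι13 k t) := by
  simp [δ₂, DirectSum.toModule_lof, LinearMap.sum_apply]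

end Helpers

/-- `β₀` (with `β₀(e₂) = x`) is a Hochschild 2-cocycle on the
Koszul resolution of `k[x]/(x²)`, and `β₁` is a homotopy lifting of it:
it satisfies the coderivation equation
`∂(β₁) = ±(β₀ ⊗_A 1 + 1 ⊗_A β₀) δ₂` with `∂(β₁) = d β₁ + β₁ d`
(the sign appropriate to the degree of `β`). -/
theorem stmt11 :
    beta0 k ∘ₗ dP k = 0 ∧
    dP k ∘ₗ beta1 k + beta1 k ∘ₗ dP k + (B01 k + B10 k) ∘ₗ δ₂ k = 0 := by
  constructor
  · refine DirectSum.linearMap_ext k fun i => TensorProduct.ext' fun a b => ?_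
    simp only [LinearMap.comp_apply, LinearMap.zero_comp, LinearMap.zero_apply]
    rw [dP_lof]
    match i with
    | 0 => simp
    | (j+1) =>
      rw [beta0_lof]
      by_cases h : j = 2
      · subst h
        rw [if_pos rfl]
        have hw : w k 3 = u k := by rw [w, if_pos (by decide : Odd 3)]
        rw [hw, u, mul_sub, sub_mul]
        simp only [Algebra.TensorProduct.tmul_mul_tmul, map_sub, LinearMap.mul'_apply,
          mul_one, one_mul]
        ring
      · simp [h]
  · refine DirectSum.linearMap_ext k fun i => TensorProduct.ext' fun a b => ?_
    simp only [LinearMap.comp_apply, LinearMap.add_apply, LinearMap.zero_comp,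
      LinearMap.zero_apply]
    rw [δ₂_lof]
    simp only [map_sum, map_zsmul, LinearMap.add_apply, B01_lof, B10_lof, smul_ite,
      smul_zero, smul_add]
    rw [Finset.sum_ite_eq']
    match i with
    | 0 => simp [dP_lof, beta1_lof]
    | 1 =>
      simp [dP_lof, beta1_lof, Finset.sum_range_succ]
    | (n+2) =>
      rw [Finset.sum_congr rfl (fun j hj => show (if n + 2 - j = 2 then
          ((-1:ℤ)^j) • (((-1:ℤ)^(j+1)) • DirectSum.lof k ℕ (fun _ => T2 k) j
            (c23x k (ι13 k (a ⊗ₜ[k] b)))) else 0) =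
          (if j = n then ((-1:ℤ)^j) • (((-1:ℤ)^(j+1)) • DirectSum.lof k ℕ (fun _ => T2 k) j
            (c23x k (ι13 k (a ⊗ₜ[k] b)))) else 0) by
        refine if_congr ?_ rfl rfl
        have := Finset.mem_range.mp hj
        omega), Finset.sum_ite_eq']
      simp only [Finset.mem_range, dP_lof, beta1_lof]
      rw [show n + 2 - 2 = n by omega]
      have h2 : (2 : ℕ) < n + 3 := by omega
      have hn : n < n + 3 := by omega
      simp only [if_pos h2, if_pos hn]
      have hc12 : c12x k (ι13 k (a ⊗ₜ[k] b)) = (a * x k) ⊗ₜ[k] b := by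
        simp [c12x, ι13, Algebra.TensorProduct.tmul_mul_tmul, LinearMap.mul'_apply]
      have hc23 : c23x k (ι13 k (a ⊗ₜ[k] b)) = a ⊗ₜ[k] (b * x k) := by
        simp [c23x, ι13, Algebra.TensorProduct.tmul_mul_tmul, LinearMap.mul'_apply,
          mul_comm]
      rw [hc12, hc23]
      rcases Nat.even_or_odd n with hn | hn
      · rw [Nat.even_iff] at hn
        have he2 : Even (n+2) := by rw [Nat.even_iff]; omega
        have he1 : ¬ Even (n+1) := by rw [Nat.even_iff]; omega
        have ho1 : Odd (n+1) := by rw [Nat.odd_iff]; omega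
        rw [if_pos he2, if_neg he1]
        simp only [map_neg, dP_lof, w, if_pos ho1, u]
        rw [mul_sub, Algebra.TensorProduct.tmul_mul_tmul,
          Algebra.TensorProduct.tmul_mul_tmul, mul_one, mul_one]
        rw [smul_smul, ← pow_add,
          Odd.neg_one_pow (by rw [Nat.odd_iff]; omega : Odd (n + (n + 1)))]
        simp only [map_sub, neg_one_sq, one_smul, neg_one_smul]
        abel
      · rw [Nat.odd_iff] at hn
        have he2 : ¬ Even (n+2) := by rw [Nat.even_iff]; omega
        have he1 : Even (n+1) := by rw [Nat.even_iff]; omega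
        have ho2 : Odd (n+2) := by rw [Nat.odd_iff]; omega
        rw [if_neg he2, if_pos he1]
        simp only [map_neg, map_zero, dP_lof, w, if_pos ho2, u]
        rw [mul_sub, Algebra.TensorProduct.tmul_mul_tmul,
          Algebra.TensorProduct.tmul_mul_tmul, mul_one, mul_one]
        rw [smul_smul, ← pow_add,
          Odd.neg_one_pow (by rw [Nat.odd_iff]; omega : Odd (n + (n + 1)))]
        simp only [map_sub, neg_one_sq, one_smul, neg_one_smul]
        abel


end Stmt11
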